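/- arXiv:2004.13396 — 4 statements merged into one kernel-verified Lean document; each statement's English description precedes it below -/
import Mathlib

section
/- In a precedence graph where i ⪯ j means station(i) ≤ station(j), if every path of tasks strictly between tasks i and j (i.e., all common successors of i and predecessors of j) has total fastest-worker processing time exceeding (L)·C where L = ⌈(∑_{k∈N'_{ij}} t(k,1))/C⌉ − 1, then in any feasible solution station(j) − station(i) ≥ L. -/
/-- If `N'` is the set of tasks on all paths from `i` to `j` (endpoints included),
all tasks of `N'` lie on stations between those of `i` and `j`, and each station's
fastest-worker workload is at most `C`, then
`station j - station i ≥ ⌈(∑_{k∈N'} t k 1)/C⌉ - 1`. -/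
theorem stmt_2 {ι : Type*} [DecidableEq ι] (N' : Finset ι) (t : ι → ℕ → ℝ)
    (C : ℝ) (hC : 0 < C) (i j : ι) (hi : i ∈ N') (hj : j ∈ N')
    (σ : ι → ℕ)
    (hbetween : ∀ k ∈ N', σ i ≤ σ k ∧ σ k ≤ σ j)
    (hfeas : ∀ s : ℕ, ∑ k ∈ N'.filter (fun k => σ k = s), t k 1 ≤ C) :
    (σ i : ℤ) + (⌈(∑ k ∈ N', t k 1) / C⌉ - 1) ≤ (σ j : ℤ) := by
  have hij : σ i ≤ σ j := (hbetween i hi).2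
  have hsum : ∑ k ∈ N', t k 1
      = ∑ s ∈ Finset.Icc (σ i) (σ j), ∑ k ∈ N'.filter (fun k => σ k = s), t k 1 := by
    exact (Finset.sum_fiberwise_of_maps_to (fun k hk => Finset.mem_Icc.2 (hbetween k hk))
      (fun k => t k 1)).symm
  have hbound : ∑ k ∈ N', t k 1 ≤ ((σ j - σ i + 1 : ℕ) : ℝ) * C := by
    rw [hsum]
    calc ∑ s ∈ Finset.Icc (σ i) (σ j), ∑ k ∈ N'.filter (fun k => σ k = s), t k 1
        ≤ ∑ _s ∈ Finset.Icc (σ i) (σ j), C :=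
          Finset.sum_le_sum (fun s _ => hfeas s)
      _ = ((σ j - σ i + 1 : ℕ) : ℝ) * C := by
          rw [Finset.sum_const, Nat.card_Icc, nsmul_eq_mul]
          have h : σ j + 1 - σ i = σ j - σ i + 1 := by omega
          rw [h]
  have hceil : ⌈(∑ k ∈ N', t k 1) / C⌉ ≤ ((σ j - σ i + 1 : ℕ) : ℤ) := by
    rw [Int.ceil_le]
    push_cast
    rw [div_le_iff₀ hC]
    push_cast at hbound
    linarith
  push_cast at hceil
  omega
end

section
/- If L_{ij} = ⌈(∑_{k∈N'_{ij}} t(k,1))/C⌉ − 1 ≥ 1 for tasks i and j with i ⪯* j, then i and j cannot be assigned to the same station in any feasible solution. -/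
/-- If `L_{ij} = ⌈(∑_{k∈N'_{ij}} t k 1)/C⌉ - 1 ≥ 1`, then tasks `i` and `j`
cannot be assigned to the same station in any feasible solution. -/
theorem stmt_3 {ι : Type*} [DecidableEq ι] (N' : Finset ι) (t : ι → ℕ → ℝ)
    (C : ℝ) (hC : 0 < C) (i j : ι) (hi : i ∈ N') (hj : j ∈ N')
    (hL : (1 : ℤ) ≤ ⌈(∑ k ∈ N', t k 1) / C⌉ - 1)
    (σ : ι → ℕ)
    (hbetween : ∀ k ∈ N', σ i ≤ σ k ∧ σ k ≤ σ j)
    (hfeas : ∀ s : ℕ, ∑ k ∈ N'.filter (fun k => σ k = s), t k 1 ≤ C) :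
    σ i ≠ σ j := by
  intro h
  have hfilt : N'.filter (fun k => σ k = σ i) = N' := by
    apply Finset.filter_true_of_mem
    intro k hk
    have := hbetween k hk
    omega
  have hsum : (∑ k ∈ N', t k 1) ≤ C := by
    have := hfeas (σ i)
    rwa [hfilt] at this
  have hdiv : (∑ k ∈ N', t k 1) / C ≤ 1 := by
    rw [div_le_one hC]; exact hsum
  have : ⌈(∑ k ∈ N', t k 1) / C⌉ ≤ 1 := by
    exact_mod_cast Int.ceil_le.mpr (by exact_mod_cast hdiv)
  omega
end

section
/- Let Δ(i,h) be the maximum of ∑_{j∈A} t(j,h) over subsets A ⊆ T∖{i} of tasks executable by worker h with ∑_{j∈A} t(j,h) ≤ C − t(i,h), and set t'(i,h) = C − Δ(i,h). Then t'(i,h) ≥ t(i,h), and for every feasible station content S containing task i processed by worker h (so ∑_{j∈S} t(j,h) ≤ C), one also has t'(i,h) + ∑_{j∈S∖{i}} t(j,h) ≤ C. Hence replacing t(i,h) by t'(i,h) in the cycle-time constraint preserves all feasible single-station assignments containing i. -/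
/-- With `Δ` the maximum subset-sum over `T \ {i}` of tasks executable by `h`
with capacity `C - t i h`, and `t' = C - Δ`, we have `t i h ≤ t'`, and every
feasible station content `S` containing `i` processed by worker `h` satisfies
the strengthened cycle-time inequality `t' + ∑_{j∈S\{i}} t j h ≤ C`. -/
theorem stmt_6 {ι : Type*} [DecidableEq ι] (T : Finset ι) (t : ι → ℕ → ℝ)
    (k : ι → ℕ) (C : ℝ) (i : ι) (h : ℕ) (hi : i ∈ T)
    (Δ : ℝ)
    (hΔ : IsGreatest {x : ℝ | ∃ A : Finset ι, A ⊆ T.erase i ∧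
        (∀ j ∈ A, h ≤ k j) ∧ x = ∑ j ∈ A, t j h ∧ x ≤ C - t i h} Δ) :
    t i h ≤ C - Δ ∧
      ∀ S : Finset ι, S ⊆ T → i ∈ S → (∀ j ∈ S, h ≤ k j) →
        (∑ j ∈ S, t j h ≤ C) →
        (C - Δ) + ∑ j ∈ S.erase i, t j h ≤ C := by
  obtain ⟨⟨A, _, _, _, hAle⟩, hub⟩ := hΔ
  constructor
  · linarith
  · intro S hST hiS hk hsum
    have hsub : S.erase i ⊆ T.erase i := Finset.erase_subset_erase i hST
    have hsplit : t i h + ∑ j ∈ S.erase i, t j h = ∑ j ∈ S, t j h :=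
      Finset.add_sum_erase S (fun j => t j h) hiS
    have hmem : (∑ j ∈ S.erase i, t j h) ∈ {x : ℝ | ∃ A : Finset ι, A ⊆ T.erase i ∧
        (∀ j ∈ A, h ≤ k j) ∧ x = ∑ j ∈ A, t j h ∧ x ≤ C - t i h} :=
      ⟨S.erase i, hsub, fun j hj => hk j (Finset.mem_of_mem_erase hj), rfl, by linarith⟩
    have := hub hmem
    linarith
end

section
/- If tasks u and v satisfy L_{uv} > 0 (for u ⪯* v), then in any single feasible station, the 'incompatibility' constraint α_u + α_v ≤ 1 is valid: u and v cannot both be assigned to that station. -/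
/-- If `L_{uv} = ⌈(∑_{k∈N'_{uv}} t k 1)/C⌉ - 1 > 0`, then for any single
feasible station `s`, the incompatibility constraint `α_u + α_v ≤ 1` is
valid: `u` and `v` cannot both be assigned to `s`. -/
theorem stmt_11 {ι : Type*} [DecidableEq ι] (N' : Finset ι) (t : ι → ℕ → ℝ)
    (C : ℝ) (hC : 0 < C) (u v : ι) (hu : u ∈ N') (hv : v ∈ N')
    (hL : (0 : ℤ) < ⌈(∑ k ∈ N', t k 1) / C⌉ - 1)
    (σ : ι → ℕ)
    (hbetween : ∀ k ∈ N', σ u ≤ σ k ∧ σ k ≤ σ v)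
    (hfeas : ∀ s : ℕ, ∑ k ∈ N'.filter (fun k => σ k = s), t k 1 ≤ C)
    (s : ℕ) :
    (if σ u = s then 1 else 0) + (if σ v = s then 1 else 0) ≤ 1 := by
  by_contra h
  push_neg at h
  split_ifs at h with h1 h2 <;> try norm_num at h
  -- h1 : σ u = s, h2 : σ v = s
  have hfilt : N'.filter (fun k => σ k = s) = N' := by
    apply Finset.filter_true_of_mem
    intro k hk
    obtain ⟨hl, hr⟩ := hbetween k hk
    omega
  have hsum : (∑ k ∈ N', t k 1) ≤ C := by
    have := hfeas s
    rwa [hfilt] at this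
  have hle : (∑ k ∈ N', t k 1) / C ≤ 1 := by
    rw [div_le_one hC]; exact hsum
  have : ⌈(∑ k ∈ N', t k 1) / C⌉ ≤ 1 := by
    calc ⌈(∑ k ∈ N', t k 1) / C⌉ ≤ ⌈(1:ℝ)⌉ := Int.ceil_le_ceil hle
    _ = 1 := by norm_num
  omega
end
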